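/- For every A ∈ 𝒜_n(k) and every j ∈ {1,…,n}: φ(A)·x_j·φ(A)^{−1} = Σ_{i=1}^n x_i·A_{ij}, and φ(A)·p_j·φ(A)^{−1} = Σ_{i=1}^n p_i·(A^{−1})_{ji}. -/

import Mathlib

/-!
For the normal-ordering map `N`, the Weyl relations give, by induction on `f`,
`N(f)·x_j = x_j·N(f) + N(∂f/∂p_j)` and `p_j·N(f) = N(f)·p_j + N(∂f/∂x_j)`.
Applied coefficientwise to `exp E` with `E = Σ x_i (A - 𝟙)_{ij} p_j`, together with
`∂ exp E = exp E · ∂E`, they give `φ x_j = (Σ_i x_i A_{ij}) φ` and `p_j φ = Σ_i A_{ji} φ p_i`.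
The second family is inverted with `A⁻¹`, which exists since `A ≡ 𝟙 (mod h)`, and `φ` itself is
invertible because its constant term is `N(1) = 1`.
-/

open PowerSeries

noncomputable section

/-- Exponential of a formal power series with coefficients in a (possibly noncommutative)
ℚ-algebra; intended for series with zero constant term. -/
def psExp {B : Type*} [Ring B] [Algebra ℚ B] (a : PowerSeries B) : PowerSeries B :=
  PowerSeries.mk fun m =>
    ∑ r ∈ Finset.range (m + 1), (r.factorial : ℚ)⁻¹ • (PowerSeries.coeff (R := B) m (a ^ r))

/-- Coefficientwise extension of a map `R → S` to formal power series. -/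
def liftFun {R S : Type*} [Semiring R] [Semiring S] (f : R → S) (g : PowerSeries R) :
    PowerSeries S :=
  PowerSeries.mk fun m => f (PowerSeries.coeff (R := R) m g)

/-- The normal-ordering property of a map `N : k[x_1,…,x_n,p_1,…,p_n] → A_n(k)`. -/
def IsNormalOrdering {k : Type*} [Field k] {n : ℕ} {B : Type*} [Ring B] [Algebra k B]
    (x p : Fin n → B) (N : MvPolynomial (Fin n ⊕ Fin n) k →ₗ[k] B) : Prop :=
  ∀ d : (Fin n ⊕ Fin n) →₀ ℕ,
    N (MvPolynomial.monomial d 1) =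
      ((List.finRange n).map fun i => x i ^ d (Sum.inl i)).prod *
        ((List.finRange n).map fun i => p i ^ d (Sum.inr i)).prod

/-- `A ≡ 𝟙 (mod h)`, i.e. membership of `A` in `𝒜_n(k)`. -/
def IsOneModH {k : Type*} [CommRing k] {n : ℕ}
    (A : Matrix (Fin n) (Fin n) (PowerSeries k)) : Prop :=
  ∀ i j, PowerSeries.constantCoeff (R := k) (A i j) = if i = j then 1 else 0

/-- `φ(A) := N(exp(Σ_{i,j} x_i (A − 𝟙)_{ij} p_j))`. -/
def phiMat {k : Type*} [Field k] [CharZero k] {n : ℕ} {B : Type*} [Ring B] [Algebra k B]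
    (N : MvPolynomial (Fin n ⊕ Fin n) k →ₗ[k] B)
    (A : Matrix (Fin n) (Fin n) (PowerSeries k)) : PowerSeries B :=
  liftFun N (psExp (∑ i : Fin n, ∑ j : Fin n,
    PowerSeries.C (R := MvPolynomial (Fin n ⊕ Fin n) k)
        (MvPolynomial.X (Sum.inl i) * MvPolynomial.X (Sum.inr j)) *
      PowerSeries.map (MvPolynomial.C) ((A - 1) i j)))

section Exp

variable {S : Type*} [CommRing S] [Algebra ℚ S]

def expPartialSum (E : S) (M : ℕ) : S :=
  ∑ r ∈ Finset.range (M + 1), (r.factorial : ℚ)⁻¹ • E ^ r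

theorem Derivation.map_expPartialSum_succ {K : Type*} [CommSemiring K] [Algebra K S]
    (D : Derivation K S S) (E : S) (M : ℕ) :
    D (expPartialSum E (M + 1)) = expPartialSum E M * D E := by
  rw [expPartialSum, map_sum, Finset.sum_range_succ', expPartialSum, Finset.sum_mul]
  simp only [map_rat_smul, Derivation.leibniz_pow, pow_zero, Derivation.map_one_eq_zero,
    smul_zero, add_zero, add_tsub_cancel_right]
  refine Finset.sum_congr rfl fun r _ => ?_
  rw [Nat.factorial_succ, smul_eq_mul, ← Nat.cast_smul_eq_nsmul ℚ, smul_smul, smul_mul_assoc]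
  congr 1
  push_cast
  field_simp

end Exp

namespace PowerSeries

section CoeffwiseDerivation

variable {K R : Type*} [CommSemiring K] [CommRing R] [Algebra K R] (D : Derivation K R R)

def coeffwiseDerivation : Derivation K R⟦X⟧ R⟦X⟧ :=
  Derivation.mk'
    { toFun := fun q => mk fun m => D (coeff m q)
      map_add' := fun a b => by ext m; simp
      map_smul' := fun c a => by ext m; simp }
    fun a b => by
      ext m
      rw [smul_eq_mul, smul_eq_mul, mul_comm b]
      simp only [LinearMap.coe_mk, AddHom.coe_mk, coeff_mk, coeff_mul, map_add, map_sum,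
        Derivation.leibniz, smul_eq_mul, Finset.sum_add_distrib, mul_comm (D _)]

@[simp]
theorem coeff_coeffwiseDerivation (q : R⟦X⟧) (m : ℕ) :
    coeff m (coeffwiseDerivation D q) = D (coeff m q) :=
  coeff_mk m fun m => D (coeff m q)

@[simp]
theorem coeffwiseDerivation_C (c : R) : coeffwiseDerivation D (C c) = C (D c) := by
  ext m; simp [coeff_C, apply_ite D]

@[simp]
theorem coeffwiseDerivation_map_algebraMap (s : K⟦X⟧) :
    coeffwiseDerivation D (map (algebraMap K R) s) = 0 := by
  ext m; simp

end CoeffwiseDerivation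

variable {R : Type*} [CommRing R]

theorem coeff_pow_eq_zero_of_lt {E : R⟦X⟧} (hE : constantCoeff E = 0) {m r : ℕ} (h : m < r) :
    coeff m (E ^ r) = 0 :=
  X_pow_dvd_iff.mp (pow_dvd_pow_of_dvd (X_dvd_iff.mpr hE) r) m h

variable [Algebra ℚ R]

theorem coeff_psExp_eq_coeff_expPartialSum {E : R⟦X⟧} (hE : constantCoeff E = 0) {m M : ℕ}
    (h : m ≤ M) : coeff m (psExp E) = coeff m (expPartialSum E M) := by
  rw [psExp, coeff_mk, expPartialSum, map_sum]
  simp only [coeff_smul]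
  refine Finset.sum_subset (Finset.range_subset_range.2 (by omega)) fun r _ hr => ?_
  simp only [Finset.mem_range, not_lt] at hr
  rw [coeff_pow_eq_zero_of_lt hE (by omega), smul_zero]

theorem coeffwiseDerivation_psExp {K : Type*} [CommSemiring K] [Algebra K R]
    (D : Derivation K R R) {E : R⟦X⟧} (hE : constantCoeff E = 0) :
    coeffwiseDerivation D (psExp E) = psExp E * coeffwiseDerivation D E := by
  ext m
  rw [coeff_coeffwiseDerivation, coeff_psExp_eq_coeff_expPartialSum hE (Nat.le_succ m),
    ← coeff_coeffwiseDerivation, Derivation.map_expPartialSum_succ, coeff_mul, coeff_mul]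
  refine Finset.sum_congr rfl fun uw huw => ?_
  rw [coeff_psExp_eq_coeff_expPartialSum hE (Finset.HasAntidiagonal.antidiagonal.fst_le huw)]

end PowerSeries

theorem List.prod_map_pow_eq_mul {M ι : Type*} [Monoid M] (f : ι → M) {l : List ι}
    (hl : l.Nodup) {i : ι} (hi : i ∈ l) (hf : ∀ m ∈ l, Commute (f i) (f m)) {e e' : ι → ℕ}
    (he'i : e' i = e i + 1) (he' : ∀ m ≠ i, e' m = e m) :
    (l.map fun m => f m ^ e' m).prod = f i * (l.map fun m => f m ^ e m).prod := by
  induction l with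
  | nil => simp at hi
  | cons a l ih =>
    rw [List.nodup_cons] at hl
    simp only [List.map_cons, List.prod_cons]
    by_cases hai : a = i
    · subst hai
      have hrest : (l.map fun m => f m ^ e' m) = l.map fun m => f m ^ e m :=
        List.map_congr_left fun m hm => by rw [he' m (fun h => hl.1 (h ▸ hm))]
      rw [hrest, he'i, pow_succ', mul_assoc]
    · have hil : i ∈ l := (List.mem_cons.mp hi).resolve_left (Ne.symm hai)
      rw [he' a hai, ih hl.2 hil fun m hm => hf m (List.mem_cons_of_mem a hm), ← mul_assoc,
        ← ((hf a List.mem_cons_self).pow_right (e a)).eq, mul_assoc]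

namespace IsNormalOrdering

open MvPolynomial

variable {k : Type*} [Field k] {n : ℕ} {B : Type*} [Ring B] [Algebra k B] {x p : Fin n → B}
  {N : MvPolynomial (Fin n ⊕ Fin n) k →ₗ[k] B}

theorem map_monomial (hN : IsNormalOrdering x p N) (d : (Fin n ⊕ Fin n) →₀ ℕ) (a : k) :
    N (monomial d a) = a • (((List.finRange n).map fun i => x i ^ d (Sum.inl i)).prod *
        ((List.finRange n).map fun i => p i ^ d (Sum.inr i)).prod) := by
  rw [← hN, ← map_smul, smul_monomial, smul_eq_mul, mul_one]

theorem map_C (hN : IsNormalOrdering x p N) (a : k) : N (C a) = algebraMap k B a := by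
  rw [MvPolynomial.C_apply, map_monomial hN, Algebra.algebraMap_eq_smul_one]
  simp

theorem map_one (hN : IsNormalOrdering x p N) : N 1 = 1 := by
  rw [← MvPolynomial.C_1, hN.map_C, _root_.map_one]

theorem map_X_inl_mul (hN : IsNormalOrdering x p N) (hxx : ∀ i j, x i * x j = x j * x i)
    (i : Fin n) (f : MvPolynomial (Fin n ⊕ Fin n) k) : N (.X (Sum.inl i) * f) = x i * N f := by
  induction f using MvPolynomial.induction_on' with
  | add f g hf hg => rw [mul_add, map_add, hf, hg, map_add, mul_add]
  | monomial d a =>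
    rw [MvPolynomial.X, monomial_mul, one_mul, map_monomial hN, map_monomial hN, mul_smul_comm,
      ← mul_assoc, List.prod_map_pow_eq_mul x (List.nodup_finRange n) (List.mem_finRange i)
        (fun m _ => hxx i m) (e := fun m => d (Sum.inl m)) (by simp [add_comm])
        fun m hm => by simp [Ne.symm hm]]
    simp

theorem map_mul_X_inr (hN : IsNormalOrdering x p N) (hpp : ∀ i j, p i * p j = p j * p i)
    (i : Fin n) (f : MvPolynomial (Fin n ⊕ Fin n) k) : N (f * .X (Sum.inr i)) = N f * p i := by
  induction f using MvPolynomial.induction_on' with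
  | add f g hf hg => rw [add_mul, map_add, hf, hg, map_add, add_mul]
  | monomial d a =>
    rw [MvPolynomial.X, monomial_mul, mul_one, map_monomial hN, map_monomial hN, smul_mul_assoc,
      mul_assoc, List.prod_map_pow_eq_mul p (List.nodup_finRange n) (List.mem_finRange i)
        (fun m _ => hpp i m) (e := fun m => d (Sum.inr m)) (by simp)
        fun m hm => by simp [Ne.symm hm],
      (Commute.list_prod_right _ _ fun b hb => ?_).eq]
    · simp
    · obtain ⟨m, -, rfl⟩ := List.mem_map.mp hb
      exact Commute.pow_right (hpp i m) _

theorem map_mul_x (hN : IsNormalOrdering x p N) (hxx : ∀ i j, x i * x j = x j * x i)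
    (hpp : ∀ i j, p i * p j = p j * p i)
    (hpx : ∀ i j, p i * x j - x j * p i = if i = j then (1 : B) else 0)
    (j : Fin n) (f : MvPolynomial (Fin n ⊕ Fin n) k) :
    N f * x j = x j * N f + N (pderiv (Sum.inr j) f) := by
  induction f using MvPolynomial.induction_on with
  | C a => rw [map_C hN, Algebra.commutes, pderiv_C, map_zero, add_zero]
  | add f g hf hg => rw [map_add, add_mul, hf, hg, map_add, map_add, mul_add]; abel
  | mul_X f v ih =>
    cases v with
    | inl i =>
      have hD : pderiv (Sum.inr j) (f * .X (Sum.inl i)) =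
          .X (Sum.inl i) * pderiv (Sum.inr j) f := by
        simp [pderiv_X]
      rw [hD, mul_comm f, map_X_inl_mul hN hxx, map_X_inl_mul hN hxx, mul_assoc, ih, mul_add,
        ← mul_assoc, hxx, mul_assoc]
    | inr i =>
      have hD : pderiv (Sum.inr j) (f * .X (Sum.inr i)) =
          pderiv (Sum.inr j) f * .X (Sum.inr i) + if i = j then f else 0 := by
        by_cases h : i = j <;> simp [pderiv_X, h, add_comm, mul_comm]
      rw [hD, map_add, map_mul_X_inr hN hpp, map_mul_X_inr hN hpp, mul_assoc,
        sub_eq_iff_eq_add'.mp (hpx i j), mul_add, ← mul_assoc, ih, apply_ite N, map_zero,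
        mul_ite, mul_one, mul_zero, add_mul, mul_assoc]
      abel

theorem p_mul_map (hN : IsNormalOrdering x p N) (hxx : ∀ i j, x i * x j = x j * x i)
    (hpp : ∀ i j, p i * p j = p j * p i)
    (hpx : ∀ i j, p i * x j - x j * p i = if i = j then (1 : B) else 0)
    (j : Fin n) (f : MvPolynomial (Fin n ⊕ Fin n) k) :
    p j * N f = N f * p j + N (pderiv (Sum.inl j) f) := by
  induction f using MvPolynomial.induction_on with
  | C a => rw [map_C hN, ← Algebra.commutes, pderiv_C, map_zero, add_zero]
  | add f g hf hg => rw [map_add, mul_add, hf, hg, map_add, map_add, add_mul]; abel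
  | mul_X f v ih =>
    cases v with
    | inl i =>
      have hD : pderiv (Sum.inl j) (f * .X (Sum.inl i)) =
          .X (Sum.inl i) * pderiv (Sum.inl j) f + if j = i then f else 0 := by
        by_cases h : j = i <;> simp [pderiv_X, h, add_comm]
      rw [hD, map_add, mul_comm f, map_X_inl_mul hN hxx, map_X_inl_mul hN hxx, ← mul_assoc,
        sub_eq_iff_eq_add'.mp (hpx j i), add_mul, mul_assoc, ih, apply_ite N, map_zero,
        ite_mul, one_mul, zero_mul, mul_add, mul_assoc]
      abel
    | inr i =>
      have hD : pderiv (Sum.inl j) (f * .X (Sum.inr i)) =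
          pderiv (Sum.inl j) f * .X (Sum.inr i) := by
        simp [pderiv_X, mul_comm]
      rw [hD, map_mul_X_inr hN hpp, map_mul_X_inr hN hpp, ← mul_assoc, ih,
        add_mul, mul_assoc, hpp, mul_assoc]

end IsNormalOrdering

section LiftFun

variable {k R B : Type*} [CommSemiring k] [CommRing R] [Algebra k R] [Ring B] [Algebra k B]
  (N : R →ₗ[k] B)

@[simp]
theorem coeff_liftFun {S T : Type*} [Semiring S] [Semiring T] (f : S → T) (g : S⟦X⟧) (m : ℕ) :
    coeff m (liftFun f g) = f (coeff m g) :=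
  coeff_mk m _

theorem liftFun_sum {ι : Type*} (s : Finset ι) (g : ι → R⟦X⟧) :
    liftFun N (∑ i ∈ s, g i) = ∑ i ∈ s, liftFun N (g i) := by
  ext m; simp [map_sum]

theorem liftFun_C_mul {c : R} {u : B} (h : ∀ f, N (c * f) = u * N f) (q : R⟦X⟧) :
    liftFun N (C c * q) = C u * liftFun N q := by
  ext m; simp [h]

theorem liftFun_mul_C {c : R} {u : B} (h : ∀ f, N (f * c) = N f * u) (q : R⟦X⟧) :
    liftFun N (q * C c) = liftFun N q * C u := by
  ext m; simp [h]

theorem liftFun_map_algebraMap_mul (s : k⟦X⟧) (q : R⟦X⟧) :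
    liftFun N (map (algebraMap k R) s * q) = map (algebraMap k B) s * liftFun N q := by
  ext m
  simp only [coeff_liftFun, coeff_mul, coeff_map, map_sum, ← Algebra.smul_def, map_smul]

theorem liftFun_mul_C_of_commutator {z : B} {D : Derivation k R R}
    (h : ∀ f, N f * z = z * N f + N (D f)) (q : R⟦X⟧) :
    liftFun N q * C z = C z * liftFun N q + liftFun N (coeffwiseDerivation D q) := by
  ext m; simp [h]

theorem C_mul_liftFun_of_commutator {z : B} {D : Derivation k R R}
    (h : ∀ f, z * N f = N f * z + N (D f)) (q : R⟦X⟧) :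
    C z * liftFun N q = liftFun N q * C z + liftFun N (coeffwiseDerivation D q) := by
  ext m; simp [h]

end LiftFun

section WeylExponent

variable {k : Type*} [CommRing k] {n : ℕ}

def weylExponent (M : Matrix (Fin n) (Fin n) k⟦X⟧) : (MvPolynomial (Fin n ⊕ Fin n) k)⟦X⟧ :=
  ∑ i, ∑ j, C (MvPolynomial.X (Sum.inl i) * MvPolynomial.X (Sum.inr j)) *
    map MvPolynomial.C (M i j)

theorem constantCoeff_weylExponent {M : Matrix (Fin n) (Fin n) k⟦X⟧}
    (hM : ∀ i j, constantCoeff (M i j) = 0) : constantCoeff (weylExponent M) = 0 := by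
  have hC : ∀ s : k⟦X⟧, constantCoeff (map MvPolynomial.C s) =
      MvPolynomial.C (σ := Fin n ⊕ Fin n) (constantCoeff s) := fun s => by
    rw [← coeff_zero_eq_constantCoeff_apply, coeff_map, coeff_zero_eq_constantCoeff_apply]
  simp [weylExponent, hC, hM]

theorem coeffwiseDerivation_pderiv_inr_weylExponent (M : Matrix (Fin n) (Fin n) k⟦X⟧)
    (j : Fin n) :
    coeffwiseDerivation (MvPolynomial.pderiv (Sum.inr j)) (weylExponent M) =
      ∑ i, map MvPolynomial.C (M i j) * C (MvPolynomial.X (Sum.inl i)) := by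
  simp [weylExponent, ← MvPolynomial.algebraMap_eq, MvPolynomial.pderiv_X, Pi.single_apply]

theorem coeffwiseDerivation_pderiv_inl_weylExponent (M : Matrix (Fin n) (Fin n) k⟦X⟧)
    (j : Fin n) :
    coeffwiseDerivation (MvPolynomial.pderiv (Sum.inl j)) (weylExponent M) =
      ∑ i, map MvPolynomial.C (M j i) * C (MvPolynomial.X (Sum.inr i)) := by
  simp [weylExponent, ← MvPolynomial.algebraMap_eq, MvPolynomial.pderiv_X, Pi.single_apply]

end WeylExponent

theorem IsOneModH.constantCoeff_sub_one {k : Type*} [CommRing k] {n : ℕ}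
    {A : Matrix (Fin n) (Fin n) (PowerSeries k)} (hA : IsOneModH A) (i j : Fin n) :
    PowerSeries.constantCoeff ((A - 1) i j) = 0 := by
  simp [Matrix.sub_apply, Matrix.one_apply, hA i j]

theorem IsOneModH.isUnit_det {k : Type*} [CommRing k] {n : ℕ}
    {A : Matrix (Fin n) (Fin n) (PowerSeries k)} (hA : IsOneModH A) : IsUnit A.det := by
  have hA1 : A.map PowerSeries.constantCoeff = 1 := by
    ext i j; rw [Matrix.map_apply, hA i j, Matrix.one_apply]
  rw [PowerSeries.isUnit_iff_constantCoeff, RingHom.map_det, RingHom.mapMatrix_apply, hA1,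
    Matrix.det_one]
  exact isUnit_one

section PhiMat

variable {k : Type*} [Field k] [CharZero k] {n : ℕ} {B : Type*} [Ring B] [Algebra k B]
  {x p : Fin n → B} {N : MvPolynomial (Fin n ⊕ Fin n) k →ₗ[k] B}
  {A : Matrix (Fin n) (Fin n) k⟦X⟧}

theorem phiMat_eq : phiMat N A = liftFun N (psExp (weylExponent (A - 1))) := rfl

theorem constantCoeff_phiMat (hN : IsNormalOrdering x p N) :
    constantCoeff (phiMat N A) = 1 := by
  rw [← coeff_zero_eq_constantCoeff_apply, phiMat, coeff_liftFun, psExp, coeff_mk]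
  simpa using hN.map_one

theorem phiMat_mul_C_x (hN : IsNormalOrdering x p N) (hxx : ∀ i j, x i * x j = x j * x i)
    (hpp : ∀ i j, p i * p j = p j * p i)
    (hpx : ∀ i j, p i * x j - x j * p i = if i = j then (1 : B) else 0)
    (hA : IsOneModH A) (j : Fin n) :
    phiMat N A * C (x j) = (∑ i, C (x i) * map (algebraMap k B) (A i j)) * phiMat N A := by
  set E := weylExponent (A - 1)
  have hsplit : ∑ i, C (x i) * map (algebraMap k B) (A i j) =
      C (x j) + ∑ i, C (x i) * map (algebraMap k B) ((A - 1) i j) := by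
    nth_rewrite 1 [← sub_add_cancel A 1]
    simp only [Matrix.add_apply, map_add, mul_add, Finset.sum_add_distrib, Matrix.one_apply]
    rw [add_comm]
    congr 1
    simp
  have hterm : ∀ i (s : k⟦X⟧),
      liftFun N (psExp E * (map MvPolynomial.C s * C (.X (Sum.inl i)))) =
        C (x i) * (map (algebraMap k B) s * liftFun N (psExp E)) := by
    intro i s
    rw [← MvPolynomial.algebraMap_eq, mul_comm, mul_assoc, mul_left_comm,
      liftFun_C_mul N (hN.map_X_inl_mul hxx i), liftFun_map_algebraMap_mul]
  rw [hsplit, add_mul, Finset.sum_mul, phiMat_eq,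
    liftFun_mul_C_of_commutator N (hN.map_mul_x hxx hpp hpx j),
    coeffwiseDerivation_psExp _ (constantCoeff_weylExponent hA.constantCoeff_sub_one),
    coeffwiseDerivation_pderiv_inr_weylExponent, Finset.mul_sum, liftFun_sum]
  simp only [mul_assoc]
  exact congrArg _ (Finset.sum_congr rfl fun i _ => hterm i _)

theorem C_p_mul_phiMat (hN : IsNormalOrdering x p N) (hxx : ∀ i j, x i * x j = x j * x i)
    (hpp : ∀ i j, p i * p j = p j * p i)
    (hpx : ∀ i j, p i * x j - x j * p i = if i = j then (1 : B) else 0)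
    (hA : IsOneModH A) (j : Fin n) :
    C (p j) * phiMat N A = ∑ i, map (algebraMap k B) (A j i) * (phiMat N A * C (p i)) := by
  set E := weylExponent (A - 1)
  have hsplit : ∀ v : Fin n → B⟦X⟧, ∑ i, map (algebraMap k B) (A j i) * v i =
      v j + ∑ i, map (algebraMap k B) ((A - 1) j i) * v i := by
    intro v
    nth_rewrite 1 [← sub_add_cancel A 1]
    simp only [Matrix.add_apply, map_add, add_mul, Finset.sum_add_distrib, Matrix.one_apply]
    rw [add_comm]
    congr 1
    simp
  have hterm : ∀ i (s : k⟦X⟧),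
      liftFun N (psExp E * (map MvPolynomial.C s * C (.X (Sum.inr i)))) =
        map (algebraMap k B) s * (liftFun N (psExp E) * C (p i)) := by
    intro i s
    rw [← MvPolynomial.algebraMap_eq, mul_left_comm, liftFun_map_algebraMap_mul,
      liftFun_mul_C N (hN.map_mul_X_inr hpp i)]
  rw [hsplit, phiMat_eq, C_mul_liftFun_of_commutator N (hN.p_mul_map hxx hpp hpx j),
    coeffwiseDerivation_psExp _ (constantCoeff_weylExponent hA.constantCoeff_sub_one),
    coeffwiseDerivation_pderiv_inl_weylExponent, Finset.mul_sum, liftFun_sum]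
  exact congrArg _ (Finset.sum_congr rfl fun i _ => hterm i _)

end PhiMat

theorem Matrix.eq_sum_inv_mul_of_eq_sum_mul {K S ι : Type*} [CommRing K] [Ring S] [Fintype ι]
    [DecidableEq ι] (f : K →+* S) {A : Matrix ι ι K} (hA : IsUnit A.det) {v w : ι → S}
    (h : ∀ j, v j = ∑ i, f (A j i) * w i) (j : ι) : w j = ∑ i, f (A⁻¹ j i) * v i := by
  symm
  calc ∑ i, f (A⁻¹ j i) * v i = ∑ m, ∑ i, f (A⁻¹ j i) * f (A i m) * w m := by
        simp only [h, Finset.mul_sum, mul_assoc]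
        exact Finset.sum_comm
    _ = ∑ m, f ((A⁻¹ * A) j m) * w m := by simp [Matrix.mul_apply, Finset.sum_mul]
    _ = w j := by simp [Matrix.nonsing_inv_mul A hA, Matrix.one_apply]

theorem PowerSeries.commute_C_map_algebraMap {k B : Type*} [CommSemiring k] [Semiring B]
    [Algebra k B] (b : B) (s : k⟦X⟧) : Commute (C b) (map (algebraMap k B) s) := by
  ext m; simp [coeff_C_mul, coeff_mul_C, Algebra.commutes]

/-- for `A ∈ 𝒜_n(k)`, `φ(A)` is invertible and
`φ(A)·x_j·φ(A)⁻¹ = Σ_i x_i·A_{ij}`, `φ(A)·p_j·φ(A)⁻¹ = Σ_i p_i·(A⁻¹)_{ji}`. -/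
theorem statement4 {k : Type*} [Field k] [CharZero k]
    {n : ℕ} {B : Type*} [Ring B] [Algebra k B]
    (x p : Fin n → B)
    (hxx : ∀ i j, x i * x j = x j * x i)
    (hpp : ∀ i j, p i * p j = p j * p i)
    (hpx : ∀ i j, p i * x j - x j * p i = if i = j then (1 : B) else 0)
    (N : MvPolynomial (Fin n ⊕ Fin n) k →ₗ[k] B) (hN : IsNormalOrdering x p N)
    (A : Matrix (Fin n) (Fin n) (PowerSeries k)) (hA : IsOneModH A) :
    ∃ φinv : PowerSeries B,
      phiMat N A * φinv = 1 ∧ φinv * phiMat N A = 1 ∧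
      (∀ j : Fin n,
        phiMat N A * PowerSeries.C (R := B) (x j) * φinv =
          ∑ i : Fin n, PowerSeries.C (R := B) (x i) * PowerSeries.map (algebraMap k B) (A i j)) ∧
      (∀ j : Fin n,
        phiMat N A * PowerSeries.C (R := B) (p j) * φinv =
          ∑ i : Fin n, PowerSeries.C (R := B) (p i) * PowerSeries.map (algebraMap k B) (A⁻¹ j i)) := by
  have hφ : constantCoeff (phiMat N A) = ↑(1 : Bˣ) := constantCoeff_phiMat hN
  have hφψ := mul_invOfUnit _ _ hφ
  refine ⟨invOfUnit (phiMat N A) 1, hφψ, invOfUnit_mul _ _ hφ, fun j => ?_, fun j => ?_⟩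
  · rw [phiMat_mul_C_x hN hxx hpp hpx hA, mul_assoc, hφψ, mul_one]
  · rw [Matrix.eq_sum_inv_mul_of_eq_sum_mul (map (algebraMap k B)) hA.isUnit_det
      (v := fun j => C (p j) * phiMat N A) (w := fun i => phiMat N A * C (p i))
      (C_p_mul_phiMat hN hxx hpp hpx hA) j, Finset.sum_mul]
    refine Finset.sum_congr rfl fun i _ => ?_
    rw [mul_assoc, mul_assoc, hφψ, mul_one, (commute_C_map_algebraMap _ _).eq]
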